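/- Assume cos(2nα)·(cos(2α) + sin(2α)) ≤ 1 (the large-α regime, so λ_B ≥ 0). Then the 3×2 matrix M is an isometry: Mᴴ·M = I₂. Equivalently, the vectors a₁ and a₂ form an orthonormal pair in ℂ³. (Isometry property of the optimal retrieval map, proved in Appendix D of the paper as Gᴴ·G = I.) -/

import Mathlib

open Matrix Kronecker Complex Filter
open scoped ComplexOrder

noncomputable section

/-- `|+⟩ = (1,1)/√2`. -/
def plusV : Fin 2 → ℂ := ((Real.sqrt 2 : ℂ))⁻¹ • ![1, 1]

/-- `|−⟩ = (1,−1)/√2`. -/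
def minusV : Fin 2 → ℂ := ((Real.sqrt 2 : ℂ))⁻¹ • ![1, -1]

/-- `λ_A = (1 + c̃ₙ(c̃ − s̃))/2`. -/
def lamA (n : ℕ) (α : ℝ) : ℝ :=
  (1 + Real.cos (2 * n * α) * (Real.cos (2 * α) - Real.sin (2 * α))) / 2

/-- `λ_B = (1 − c̃ₙ(c̃ + s̃))/2`. -/
def lamB (n : ℕ) (α : ℝ) : ℝ :=
  (1 - Real.cos (2 * n * α) * (Real.cos (2 * α) + Real.sin (2 * α))) / 2

/-- `ν₊ = c̃ₙ(1 − c̃² + s̃)/(1 + c̃ₙ)`. -/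
def nuP (n : ℕ) (α : ℝ) : ℝ :=
  Real.cos (2 * n * α) * (1 - Real.cos (2 * α) ^ 2 + Real.sin (2 * α)) / (1 + Real.cos (2 * n * α))

/-- `ν₋ = c̃ₙ(c̃² − 1 + s̃)/(1 − c̃ₙ)`. -/
def nuM (n : ℕ) (α : ℝ) : ℝ :=
  Real.cos (2 * n * α) * (Real.cos (2 * α) ^ 2 - 1 + Real.sin (2 * α)) / (1 - Real.cos (2 * n * α))

/-- `a₁ = (√λ_A·c/cₙ, √λ_B·s/cₙ, √ν₊)`. -/
def aOne (n : ℕ) (α : ℝ) : Fin 3 → ℂ :=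
  ![((Real.sqrt (lamA n α) * Real.cos α / Real.cos (n * α) : ℝ) : ℂ),
    ((Real.sqrt (lamB n α) * Real.sin α / Real.cos (n * α) : ℝ) : ℂ),
    ((Real.sqrt (nuP n α) : ℝ) : ℂ)]

/-- `a₂ = (√λ_A·s/sₙ, −√λ_B·c/sₙ, −√ν₋)`. -/
def aTwo (n : ℕ) (α : ℝ) : Fin 3 → ℂ :=
  ![((Real.sqrt (lamA n α) * Real.sin α / Real.sin (n * α) : ℝ) : ℂ),
    ((-(Real.sqrt (lamB n α) * Real.cos α / Real.sin (n * α)) : ℝ) : ℂ),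
    ((-Real.sqrt (nuM n α) : ℝ) : ℂ)]

/-- The qubit-to-qutrit isometry `M` with `M|+⟩ = a₁`, `M|−⟩ = a₂`. -/
def Mmat (n : ℕ) (α : ℝ) : Matrix (Fin 3) (Fin 2) ℂ :=
  Matrix.vecMulVec (aOne n α) (star plusV) + Matrix.vecMulVec (aTwo n α) (star minusV)

/-!
Since `|+⟩, |−⟩` is an orthonormal basis of `ℂ²`, `Mᴴ M = 1` says exactly that `a₁, a₂` are
orthonormal in `ℂ³`. Their entries are real. By the half-angle formulas `c² = (1 + c̃)/2`,
`cₙ² = (1 + c̃ₙ)/2` (and likewise for the sines), `‖a₁‖² = (1 + c̃ₙ)/(1 + c̃ₙ)` and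
`‖a₂‖² = (1 − c̃ₙ)/(1 − c̃ₙ)`. For orthogonality, `⟨a₁, a₂⟩ = (λ_A − λ_B)·c s/(cₙ sₙ) − √(ν₊ ν₋)`
with `λ_A − λ_B = c̃ₙ c̃`, `c s/(cₙ sₙ) = s̃/s̃ₙ` and `ν₊ ν₋ = (c̃ₙ c̃ s̃/s̃ₙ)²`. Since
`0 < 2α ≤ 2nα < π/2`, every factor here is nonnegative, so the two terms cancel.
-/

theorem conjTranspose_mul_self_vecMulVec_add_vecMulVec {m n R : Type*} [Fintype m] [CommRing R]
    [StarRing R] {a b : m → R} (u v : n → R) (ha : star a ⬝ᵥ a = 1) (hb : star b ⬝ᵥ b = 1)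
    (hab : star a ⬝ᵥ b = 0) :
    (vecMulVec a (star u) + vecMulVec b (star v))ᴴ * (vecMulVec a (star u) + vecMulVec b (star v)) =
      vecMulVec u (star u) + vecMulVec v (star v) := by
  have hba : star b ⬝ᵥ a = 0 := by rw [star_dotProduct, hab, star_zero]
  simp only [conjTranspose_add, conjTranspose_vecMulVec, star_star, Matrix.add_mul, Matrix.mul_add,
    vecMulVec_mul_vecMulVec, ha, hb, hab, hba, one_smul, zero_smul, vecMulVec_zero, add_zero, zero_add]

theorem vecMulVec_plusV_add_vecMulVec_minusV :
    vecMulVec plusV (star plusV) + vecMulVec minusV (star minusV) = 1 := by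
  have h : ((√2 : ℝ) : ℂ)⁻¹ * ((√2 : ℝ) : ℂ)⁻¹ = 2⁻¹ := by
    rw [← mul_inv, ← Complex.ofReal_mul, Real.mul_self_sqrt zero_le_two, Complex.ofReal_ofNat]
  ext i j
  fin_cases i <;> fin_cases j <;> simp [plusV, minusV, vecMulVec_apply, -cons_vecMulVec, h, ← two_mul]

theorem star_ofReal_vec3_dotProduct (x₀ x₁ x₂ y₀ y₁ y₂ : ℝ) :
    star ![(x₀ : ℂ), x₁, x₂] ⬝ᵥ ![(y₀ : ℂ), y₁, y₂] = ((x₀ * y₀ + x₁ * y₁ + x₂ * y₂ : ℝ) : ℂ) := by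
  simp [dotProduct, Fin.sum_univ_three]

section

variable {n : ℕ} {α : ℝ}

theorem lamA_nonneg (h : 0 ≤ Real.cos (2 * n * α) * Real.cos (2 * α)) : 0 ≤ lamA n α := by
  have hcs : Real.cos (2 * n * α) * Real.sin (2 * α) ≤ 1 := by
    refine (le_abs_self _).trans ?_
    rw [abs_mul]
    exact mul_le_one₀ (Real.abs_cos_le_one _) (abs_nonneg _) (Real.abs_sin_le_one _)
  unfold lamA
  linarith

theorem lamB_nonneg (h : Real.cos (2 * n * α) * (Real.cos (2 * α) + Real.sin (2 * α)) ≤ 1) :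
    0 ≤ lamB n α := by
  unfold lamB
  linarith

theorem nuP_nonneg (h : 0 ≤ Real.cos (2 * n * α)) (hs : 0 ≤ Real.sin (2 * α)) : 0 ≤ nuP n α := by
  have hnum : 0 ≤ 1 - Real.cos (2 * α) ^ 2 + Real.sin (2 * α) := by
    nlinarith [Real.sin_sq_add_cos_sq (2 * α)]
  exact div_nonneg (mul_nonneg h hnum) (by linarith [Real.neg_one_le_cos (2 * n * α)])

theorem nuM_nonneg (h : 0 ≤ Real.cos (2 * n * α)) (hs : 0 ≤ Real.sin (2 * α)) : 0 ≤ nuM n α := by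
  have hnum : 0 ≤ Real.cos (2 * α) ^ 2 - 1 + Real.sin (2 * α) := by
    nlinarith [Real.sin_sq_add_cos_sq (2 * α), Real.sin_le_one (2 * α)]
  exact div_nonneg (mul_nonneg h hnum) (by linarith [Real.cos_le_one (2 * n * α)])

variable (n α) in
theorem nuP_mul_nuM : nuP n α * nuM n α =
    (Real.cos (2 * n * α) * Real.cos (2 * α) * Real.sin (2 * α) / Real.sin (2 * n * α)) ^ 2 := by
  have hnum : Real.cos (2 * n * α) * (1 - Real.cos (2 * α) ^ 2 + Real.sin (2 * α)) *
      (Real.cos (2 * n * α) * (Real.cos (2 * α) ^ 2 - 1 + Real.sin (2 * α))) =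
      (Real.cos (2 * n * α) * Real.cos (2 * α) * Real.sin (2 * α)) ^ 2 := by
    linear_combination (Real.cos (2 * n * α) ^ 2 * (1 - Real.cos (2 * α) ^ 2)) *
      Real.sin_sq_add_cos_sq (2 * α)
  have hden : (1 + Real.cos (2 * n * α)) * (1 - Real.cos (2 * n * α)) =
      Real.sin (2 * n * α) ^ 2 := by
    linear_combination -Real.sin_sq_add_cos_sq (2 * n * α)
  rw [nuP, nuM, div_mul_div_comm, hnum, hden, div_pow]

theorem star_aOne_dotProduct_aOne (hC : Real.cos (n * α) ≠ 0) (hA : 0 ≤ lamA n α)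
    (hB : 0 ≤ lamB n α) (hP : 0 ≤ nuP n α) : star (aOne n α) ⬝ᵥ aOne n α = 1 := by
  rw [aOne, star_ofReal_vec3_dotProduct, ← Complex.ofReal_one, Complex.ofReal_inj]
  simp only [← sq, div_pow, mul_pow, Real.sq_sqrt hA, Real.sq_sqrt hB, Real.sq_sqrt hP]
  have hC2 : Real.cos (n * α) ^ 2 = (1 + Real.cos (2 * n * α)) / 2 := by
    rw [Real.cos_sq, ← mul_assoc]; ring
  have hC2_ne : 1 + Real.cos (2 * n * α) ≠ 0 := by
    intro h; apply hC; rw [← pow_eq_zero_iff two_ne_zero, hC2, h, zero_div]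
  rw [hC2, Real.cos_sq α, Real.sin_sq_eq_half_sub, lamA, lamB, nuP]
  field_simp
  ring

theorem star_aTwo_dotProduct_aTwo (hS : Real.sin (n * α) ≠ 0) (hA : 0 ≤ lamA n α)
    (hB : 0 ≤ lamB n α) (hM : 0 ≤ nuM n α) : star (aTwo n α) ⬝ᵥ aTwo n α = 1 := by
  rw [aTwo, star_ofReal_vec3_dotProduct, ← Complex.ofReal_one, Complex.ofReal_inj]
  simp only [← sq, neg_sq, div_pow, mul_pow, Real.sq_sqrt hA, Real.sq_sqrt hB, Real.sq_sqrt hM]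
  have hS2 : Real.sin (n * α) ^ 2 = (1 - Real.cos (2 * n * α)) / 2 := by
    rw [Real.sin_sq_eq_half_sub, ← mul_assoc]; ring
  have hS2_ne : 1 - Real.cos (2 * n * α) ≠ 0 := by
    intro h; apply hS; rw [← pow_eq_zero_iff two_ne_zero, hS2, h, zero_div]
  rw [hS2, Real.cos_sq α, Real.sin_sq_eq_half_sub, lamA, lamB, nuM]
  field_simp
  ring

theorem star_aOne_dotProduct_aTwo (hA : 0 ≤ lamA n α) (hB : 0 ≤ lamB n α) (hP : 0 ≤ nuP n α)
    (hsign : 0 ≤ Real.cos (2 * n * α) * Real.cos (2 * α) * Real.sin (2 * α) / Real.sin (2 * n * α)) :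
    star (aOne n α) ⬝ᵥ aTwo n α = 0 := by
  rw [aOne, aTwo, star_ofReal_vec3_dotProduct, ← Complex.ofReal_zero, Complex.ofReal_inj]
  have hsqrt : √(nuP n α) * √(nuM n α) =
      Real.cos (2 * n * α) * Real.cos (2 * α) * Real.sin (2 * α) / Real.sin (2 * n * α) := by
    rw [← Real.sqrt_mul hP, nuP_mul_nuM, Real.sqrt_sq hsign]
  have hratio : Real.sin (2 * α) / Real.sin (2 * n * α) =
      Real.sin α * Real.cos α / (Real.sin (n * α) * Real.cos (n * α)) := by
    rw [show 2 * (n : ℝ) * α = 2 * (n * α) by ring, Real.sin_two_mul, Real.sin_two_mul, mul_assoc,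
      mul_assoc, mul_div_mul_left _ _ two_ne_zero]
  have hdiff : lamA n α - lamB n α = Real.cos (2 * n * α) * Real.cos (2 * α) := by
    rw [lamA, lamB]; ring
  calc _ = (lamA n α - lamB n α) *
          (Real.sin α * Real.cos α / (Real.sin (n * α) * Real.cos (n * α))) -
          √(nuP n α) * √(nuM n α) := by
        linear_combination (Real.sin α * Real.cos α / (Real.sin (n * α) * Real.cos (n * α))) *
          (Real.mul_self_sqrt hA - Real.mul_self_sqrt hB)
    _ = 0 := by rw [hdiff, ← hratio, hsqrt]; ring

end

theorem retrieval_map_isometry (n : ℕ) (hn : 1 ≤ n) (α : ℝ) (hα : 0 < α)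
    (hdist : 4 * n * α < Real.pi)
    (hreg : Real.cos (2 * n * α) * (Real.cos (2 * α) + Real.sin (2 * α)) ≤ 1) :
    (Mmat n α)ᴴ * Mmat n α = 1 := by
  have hnα : 0 < (n : ℝ) * α := mul_pos (Nat.cast_pos.mpr hn) hα
  have hα_le : α ≤ n * α := le_mul_of_one_le_left hα.le (by exact_mod_cast hn)
  have hC : Real.cos (n * α) ≠ 0 := (Real.cos_pos_of_mem_Ioo ⟨by linarith, by linarith⟩).ne'
  have hS : Real.sin (n * α) ≠ 0 := (Real.sin_pos_of_pos_of_lt_pi hnα (by linarith)).ne'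
  have hcn : 0 ≤ Real.cos (2 * n * α) := Real.cos_nonneg_of_mem_Icc ⟨by linarith, by linarith⟩
  have hsn : 0 ≤ Real.sin (2 * n * α) :=
    Real.sin_nonneg_of_nonneg_of_le_pi (by linarith) (by linarith)
  have hc : 0 ≤ Real.cos (2 * α) := Real.cos_nonneg_of_mem_Icc ⟨by linarith, by linarith⟩
  have hs : 0 ≤ Real.sin (2 * α) := Real.sin_nonneg_of_nonneg_of_le_pi (by linarith) (by linarith)
  have hA := lamA_nonneg (mul_nonneg hcn hc)
  have hB := lamB_nonneg hreg
  have hP := nuP_nonneg hcn hs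
  rw [Mmat, conjTranspose_mul_self_vecMulVec_add_vecMulVec _ _
      (star_aOne_dotProduct_aOne hC hA hB hP)
      (star_aTwo_dotProduct_aTwo hS hA hB (nuM_nonneg hcn hs))
      (star_aOne_dotProduct_aTwo hA hB hP (div_nonneg (mul_nonneg (mul_nonneg hcn hc) hs) hsn)),
    vecMulVec_plusV_add_vecMulVec_minusV]
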